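/- Let F be a real Banach space, v ∈ F with ‖v‖ = 1, and k ≥ 2. Define Φ : ℓ∞ → P(^kℓ₁,F) by Φ(ξ)(x) = (∑_{i=1}^∞ ξ_i x_i^k) v for ξ = (ξ_i) ∈ ℓ∞ and x = (x_i) ∈ ℓ₁. Then Φ(ξ) ∈ P_wb(^kℓ₁,F) if and only if ξ ∈ c₀, i.e., if and only if lim_{i→∞} ξ_i = 0. -/

import Mathlib

noncomputable section

open Metric Filter Topology
open scoped ENNReal NNReal

namespace PPV

/-- The closed unit ball of `E`, as a set. -/
abbrev Ball (E : Type*) [NormedAddCommGroup E] : Set E := Metric.closedBall (0 : E) 1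

/-- A continuous multilinear map is symmetric. -/
def IsSymm {E F : Type*} [NormedAddCommGroup E] [NormedSpace ℝ E]
    [NormedAddCommGroup F] [NormedSpace ℝ F] {k : ℕ}
    (A : ContinuousMultilinearMap ℝ (fun _ : Fin k => E) F) : Prop :=
  ∀ (σ : Equiv.Perm (Fin k)) (v : Fin k → E), (A fun i => v (σ i)) = A v

/-- `A` is the (symmetric) continuous multilinear map associated to the continuous
`k`-homogeneous polynomial represented by `f`, a bounded continuous function on the
closed unit ball of `E` (a continuous `k`-homogeneous polynomial is determined by
its restriction to the unit ball, and its norm is the sup norm there). -/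
def Represents {E F : Type*} [NormedAddCommGroup E] [NormedSpace ℝ E]
    [NormedAddCommGroup F] [NormedSpace ℝ F] {k : ℕ}
    (A : ContinuousMultilinearMap ℝ (fun _ : Fin k => E) F)
    (f : BoundedContinuousFunction (Ball E) F) : Prop :=
  IsSymm A ∧ ∀ y : Ball E, f y = A fun _ => (y : E)

/-- The space `P(^kE,F)` of continuous `k`-homogeneous polynomials from `E` to `F`,
realized (isometrically, via restriction to the unit ball) as a submodule of the space
of bounded continuous functions on the closed unit ball of `E`; the induced norm is
`‖P‖ = sup_{‖x‖ ≤ 1} ‖P x‖`. -/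
def polySet (k : ℕ) (E F : Type*) [NormedAddCommGroup E] [NormedSpace ℝ E]
    [NormedAddCommGroup F] [NormedSpace ℝ F] :
    Submodule ℝ (BoundedContinuousFunction (Ball E) F) where
  carrier := {f | ∃ A : ContinuousMultilinearMap ℝ (fun _ : Fin k => E) F, Represents A f}
  add_mem' := by
    rintro f g ⟨A, hA, hAf⟩ ⟨B, hB, hBf⟩
    exact ⟨A + B, fun σ v => by simp [hA σ v, hB σ v], fun y => by simp [hAf y, hBf y]⟩
  zero_mem' := ⟨0, fun σ v => rfl, fun y => by simp⟩
  smul_mem' := by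
    rintro c f ⟨A, hA, hAf⟩
    exact ⟨c • A, fun σ v => by simp [hA σ v], fun y => by simp [hAf y]⟩

/-- A map `P : E → F` is continuous from the weak topology of `E` to the norm topology
of `F` on bounded subsets of `E`. -/
def WeakContOnBounded (E F : Type*) [NormedAddCommGroup E] [NormedSpace ℝ E]
    [NormedAddCommGroup F] [NormedSpace ℝ F] (P : E → F) : Prop :=
  ∀ S : Set E, Bornology.IsBounded S →
    ContinuousOn (fun x : WeakSpace ℝ E => P ((toWeakSpace ℝ E).symm x))
      (toWeakSpace ℝ E '' S)

/-- The subspace `P_wb(^kE,F)` of `P(^kE,F)` consisting of the polynomials which are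
weak-to-norm continuous on bounded sets. -/
def polyWbSet (k : ℕ) (E F : Type*) [NormedAddCommGroup E] [NormedSpace ℝ E]
    [NormedAddCommGroup F] [NormedSpace ℝ F] :
    Submodule ℝ (BoundedContinuousFunction (Ball E) F) where
  carrier := {f | ∃ A : ContinuousMultilinearMap ℝ (fun _ : Fin k => E) F,
    Represents A f ∧ WeakContOnBounded E F (fun x => A fun _ => x)}
  add_mem' := by
    rintro f g ⟨A, ⟨hA, hAf⟩, hAw⟩ ⟨B, ⟨hB, hBf⟩, hBw⟩
    refine ⟨A + B, ⟨fun σ v => by simp [hA σ v, hB σ v], fun y => by simp [hAf y, hBf y]⟩,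
      fun S hS => ?_⟩
    have := (hAw S hS).add (hBw S hS)
    simpa [Pi.add_def] using this
  zero_mem' := ⟨0, ⟨fun σ v => rfl, fun y => by simp⟩, fun S hS => by
    simpa using continuousOn_const (c := (0 : F))⟩
  smul_mem' := by
    rintro c f ⟨A, ⟨hA, hAf⟩, hAw⟩
    refine ⟨c • A, ⟨fun σ v => by simp [hA σ v], fun y => by simp [hAf y]⟩, fun S hS => ?_⟩
    have := (hAw S hS).const_smul c
    simpa [Pi.smul_def] using this

/-- A Banach space `Y` contains a copy of a Banach space `X`: there is a linear
homeomorphic embedding of `X` into `Y`. -/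
def ContainsCopy (X Y : Type*) [NormedAddCommGroup X] [NormedSpace ℝ X]
    [NormedAddCommGroup Y] [NormedSpace ℝ Y] : Prop :=
  ∃ f : X →L[ℝ] Y, ∃ c : ℝ, 0 < c ∧ ∀ x, c * ‖x‖ ≤ ‖f x‖

/-- A Banach space `Y` contains a complemented copy of a Banach space `X`: there is a
linear homeomorphic embedding of `X` into `Y` whose image is the range of a bounded
linear projection on `Y`. -/
def ContainsComplCopy (X Y : Type*) [NormedAddCommGroup X] [NormedSpace ℝ X]
    [NormedAddCommGroup Y] [NormedSpace ℝ Y] : Prop :=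
  ∃ f : X →L[ℝ] Y, (∃ c : ℝ, 0 < c ∧ ∀ x, c * ‖x‖ ≤ ‖f x‖) ∧
    ∃ π : Y →L[ℝ] Y, (∀ y, π y ∈ Set.range f) ∧ ∀ y ∈ Set.range f, π y = y

/-- The Banach space `ℓ∞` of bounded real sequences with the sup norm. -/
abbrev Linf : Type := lp (fun _ : ℕ => ℝ) ⊤

/-- The Banach space `ℓ₁` of absolutely summable real sequences. -/
abbrev LOne : Type := lp (fun _ : ℕ => ℝ) 1

/-- `c₀`, the subspace of `ℓ∞` of sequences converging to `0`. -/
def c0Set : Submodule ℝ Linf where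
  carrier := {ξ | Tendsto (fun n => ξ n) atTop (nhds (0 : ℝ))}
  add_mem' := by
    intro f g hf hg
    have h0 := hf.add hg
    rw [add_zero] at h0
    show Tendsto (fun n => (f + g) n) atTop (nhds (0 : ℝ))
    refine h0.congr fun n => ?_
    simp [lp.coeFn_add]
  zero_mem' := by
    show Tendsto (fun n => (0 : Linf) n) atTop (nhds (0 : ℝ))
    have h0 : Tendsto (fun _ : ℕ => (0 : ℝ)) atTop (nhds (0 : ℝ)) := tendsto_const_nhds
    refine h0.congr fun n => ?_
    simp [lp.coeFn_zero]
  smul_mem' := by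
    intro c f hf
    have h0 := hf.const_mul c
    rw [mul_zero] at h0
    show Tendsto (fun n => (c • f) n) atTop (nhds (0 : ℝ))
    refine h0.congr fun n => ?_
    simp [lp.coeFn_smul]

/-- A series `∑ xₙ` in a Banach space is weakly unconditionally Cauchy. -/
def WuC {X : Type*} [NormedAddCommGroup X] [NormedSpace ℝ X] (x : ℕ → X) : Prop :=
  ∀ φ : X →L[ℝ] ℝ, Summable fun n => |φ (x n)|

/-- A subset of `F` is relatively weakly compact: its closure in the weak topology
is weakly compact. -/
def RelWeaklyCompact {F : Type*} [NormedAddCommGroup F] [NormedSpace ℝ F] (s : Set F) : Prop :=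
  IsCompact (closure (toWeakSpace ℝ F '' s))

/-- A (not necessarily linear) map `P : E → F` is unconditionally converging if, for each
w.u.C. series `∑ xₙ` in `E`, the sequence `(P (∑_{i<n} x i))ₙ` converges in `F`. -/
def UncondConv {E F : Type*} [NormedAddCommGroup E] [NormedSpace ℝ E]
    [NormedAddCommGroup F] [NormedSpace ℝ F] (P : E → F) : Prop :=
  ∀ x : ℕ → E, WuC x → ∃ y : F, Tendsto (fun n => P (∑ i ∈ Finset.range n, x i)) atTop (nhds y)

/-- A Banach space `E` has Pełczyński's property (V) if every unconditionally converging
(bounded linear) operator from `E` into any Banach space is weakly compact. -/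
def PropertyV (E : Type*) [NormedAddCommGroup E] [NormedSpace ℝ E] : Prop :=
  ∀ (F : Type*) [NormedAddCommGroup F] [NormedSpace ℝ F] [CompleteSpace F],
    ∀ T : E →L[ℝ] F, UncondConv (fun x => T x) →
      RelWeaklyCompact ((fun x => T x) '' Metric.closedBall (0 : E) 1)

/-- `E` has an unconditional finite dimensional expansion of the identity: a sequence
`(Aₙ)` of finite-rank bounded operators on `E` with `x = ∑ₙ Aₙ x` unconditionally for
every `x ∈ E` (unconditional convergence of the series is `HasSum`). -/
def HasUFDEI (E : Type*) [NormedAddCommGroup E] [NormedSpace ℝ E] : Prop :=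
  ∃ A : ℕ → E →L[ℝ] E, (∀ n, FiniteDimensional ℝ (LinearMap.range (A n).toLinearMap)) ∧
    ∀ x : E, HasSum (fun n => A n x) x

/-- An operator `C : E → P(^kE,F)` is symmetric: `(C x)^(y₁,…,y_k) = (C y₁)^(x,y₂,…,y_k)`,
where `(C z)^` is the symmetric `k`-linear map associated to `C z`.  (Equivalently:
replacing, in any slot, the argument `z` of the symmetric multilinear map associated to
`C x` by `x` and instead applying the multilinear map associated to `C z` gives the
same value.) -/
def IsSymmOp {E F : Type*} [NormedAddCommGroup E] [NormedSpace ℝ E]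
    [NormedAddCommGroup F] [NormedSpace ℝ F] {k : ℕ}
    (C : E →L[ℝ] polySet k E F) : Prop :=
  ∀ (x z : E) (A B : ContinuousMultilinearMap ℝ (fun _ : Fin k => E) F),
    Represents A (C x : BoundedContinuousFunction (Ball E) F) →
    Represents B (C z : BoundedContinuousFunction (Ball E) F) →
    ∀ (v : Fin k → E) (i : Fin k),
      A (Function.update v i z) = B (Function.update v i x)

/-- `P_wb(^kE,F)` is complemented in `P(^kE,F)`: there is a bounded linear projection
on `P(^kE,F)` whose range is `P_wb(^kE,F)`. -/
def WbComplemented (k : ℕ) (E F : Type*) [NormedAddCommGroup E] [NormedSpace ℝ E]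
    [NormedAddCommGroup F] [NormedSpace ℝ F] : Prop :=
  ∃ π : polySet k E F →L[ℝ] polySet k E F,
    (∀ f : polySet k E F, (π f : BoundedContinuousFunction (Ball E) F) ∈ polyWbSet k E F) ∧
    ∀ f : polySet k E F, (f : BoundedContinuousFunction (Ball E) F) ∈ polyWbSet k E F → π f = f

/-- `ℓ_p` for an extended-real exponent `p`. -/
abbrev Lp' (p : ℝ≥0∞) : Type := lp (fun _ : ℕ => ℝ) p

end PPV

namespace Stmts
open PPV Metric Filter Topology
open scoped ENNReal NNReal

/-!
If `ξ → 0`, the partial sums `∑_{i<N} ξᵢ xᵢ^k` are weakly continuous and converge uniformly on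
bounded sets, the tail being at most `sup_{i ≥ N} |ξᵢ| ‖x‖^k`.

If `|ξ_{u n}| ≥ ε` along a subsequence, weak continuity at `0` on the unit ball gives finitely many
functionals controlling `Φ(ξ)` near `0`. By compactness in finite dimensions there are `a < b < c`
on whose unit vectors these functionals, and `ξ`, nearly agree. Then `x = (e_a + e_b - 2 e_c) / 4`
lies in the unit ball and is weakly small, while `4^k ∑ ξᵢ xᵢ^k ≈ (2 + (-2)^k) ξ_c` with
`|2 + (-2)^k| ≥ 6` for `k ≥ 2`.
-/

section SummableBounds

variable {k : ℕ} {c x : ℕ → ℝ} {ε : ℝ}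

lemma abs_mul_pow_le (hc : ∀ i, |c i| ≤ ε) (hx : Summable fun i => |x i|) (hk : k ≠ 0)
    (i : ℕ) : |c i * x i ^ k| ≤ ε * (∑' j, |x j|) ^ (k - 1) * |x i| := by
  have hxi : |x i| ≤ ∑' j, |x j| := hx.le_tsum i fun j _ => abs_nonneg _
  calc |c i * x i ^ k| = |c i| * (|x i| ^ (k - 1) * |x i|) := by
        rw [abs_mul, abs_pow, ← pow_succ, Nat.sub_add_cancel (Nat.one_le_iff_ne_zero.2 hk)]
    _ ≤ ε * ((∑' j, |x j|) ^ (k - 1) * |x i|) := by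
        have hε : 0 ≤ ε := (abs_nonneg _).trans (hc i)
        gcongr
        exact hc i
    _ = ε * (∑' j, |x j|) ^ (k - 1) * |x i| := by ring

lemma summable_mul_pow (hc : ∀ i, |c i| ≤ ε) (hx : Summable fun i => |x i|) (hk : k ≠ 0) :
    Summable fun i => c i * x i ^ k :=
  .of_norm_bounded (hx.mul_left _) (abs_mul_pow_le hc hx hk)

lemma abs_tsum_mul_pow_le (hc : ∀ i, |c i| ≤ ε) (hx : Summable fun i => |x i|) (hk : k ≠ 0) :
    |∑' i, c i * x i ^ k| ≤ ε * (∑' i, |x i|) ^ k := by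
  calc |∑' i, c i * x i ^ k| ≤ ∑' i, |c i * x i ^ k| :=
        norm_tsum_le_tsum_norm (summable_mul_pow hc hx hk).norm
    _ ≤ ∑' i, ε * (∑' j, |x j|) ^ (k - 1) * |x i| :=
        (summable_mul_pow hc hx hk).abs.tsum_le_tsum (abs_mul_pow_le hc hx hk) (hx.mul_left _)
    _ = ε * (∑' i, |x i|) ^ k := by
        rw [tsum_mul_left, mul_assoc, ← pow_succ,
          Nat.sub_add_cancel (Nat.one_le_iff_ne_zero.2 hk)]

end SummableBounds

lemma eq_of_eqOn_closedBall_of_homogeneous {E F : Type*} [NormedAddCommGroup E]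
    [NormedSpace ℝ E] [AddCommGroup F] [Module ℝ F] {k : ℕ} {P Q : E → F}
    (hP : ∀ (t : ℝ) x, P (t • x) = t ^ k • P x) (hQ : ∀ (t : ℝ) x, Q (t • x) = t ^ k • Q x)
    (h : ∀ x ∈ closedBall (0 : E) 1, P x = Q x) : P = Q := by
  funext x
  have ht : 0 < ‖x‖ + 1 := by positivity
  have hy : (‖x‖ + 1)⁻¹ • x ∈ closedBall (0 : E) 1 := by
    rw [mem_closedBall_zero_iff, norm_smul, norm_inv, Real.norm_of_nonneg ht.le,
      inv_mul_le_iff₀ ht]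
    linarith
  rw [← smul_inv_smul₀ ht.ne' x, hP, hQ, h _ hy]

lemma _root_.ContinuousMultilinearMap.map_smul_diag {E F : Type*} [NormedAddCommGroup E]
    [NormedSpace ℝ E] [NormedAddCommGroup F] [NormedSpace ℝ F] {k : ℕ}
    (A : ContinuousMultilinearMap ℝ (fun _ : Fin k => E) F) (t : ℝ) (x : E) :
    (A fun _ => t • x) = t ^ k • A fun _ => x := by
  simpa using A.map_smul_univ (fun _ => t) (fun _ => x)

/-- `Φ(ξ) = diagSum ξ k • v`. -/
def diagSum (ξ : Linf) (k : ℕ) (x : LOne) : ℝ := ∑' i, ξ i * x i ^ k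

lemma diagSum_smul (ξ : Linf) (k : ℕ) (t : ℝ) (x : LOne) :
    diagSum ξ k (t • x) = t ^ k * diagSum ξ k x := by
  simp only [diagSum, ← tsum_mul_left, lp.coeFn_smul, Pi.smul_apply, smul_eq_mul, mul_pow]
  congr 1; funext i; ring

lemma LOne.summable_abs (x : LOne) : Summable fun i => |x i| := by
  simpa using (lp.memℓp x).summable (p := 1) one_pos

lemma LOne.norm_eq_tsum_abs (x : LOne) : ‖x‖ = ∑' i, |x i| := by
  simpa using lp.norm_eq_tsum_rpow (p := 1) one_pos x

lemma Linf.abs_apply_le_norm (ξ : Linf) (i : ℕ) : |ξ i| ≤ ‖ξ‖ :=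
  lp.norm_apply_le_norm ENNReal.top_ne_zero ξ i

lemma continuous_weakSpace_apply (i : ℕ) :
    Continuous fun w : WeakSpace ℝ LOne => ((toWeakSpace ℝ LOne).symm w : LOne) i :=
  WeakBilin.eval_continuous _ (lp.evalCLM ℝ (fun _ : ℕ => ℝ) 1 i)

lemma abs_diagSum_sub_sum_range_le {ξ : Linf} {k : ℕ} (hk : k ≠ 0) {N : ℕ} {ε : ℝ}
    (hξ : ∀ i ≥ N, |ξ i| ≤ ε) (x : LOne) :
    |diagSum ξ k x - ∑ i ∈ Finset.range N, ξ i * x i ^ k| ≤ ε * ‖x‖ ^ k := by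
  have hx := LOne.summable_abs x
  have htail : ∀ i, |ξ (i + N)| ≤ ε := fun i => hξ _ (Nat.le_add_left N i)
  have hxtail := (summable_nat_add_iff N).2 hx
  rw [diagSum, ← (summable_mul_pow (Linf.abs_apply_le_norm ξ) hx hk).sum_add_tsum_nat_add N,
    add_sub_cancel_left]
  calc |∑' i, ξ (i + N) * x (i + N) ^ k| ≤ ε * (∑' i, |x (i + N)|) ^ k :=
        abs_tsum_mul_pow_le htail hxtail hk
    _ ≤ ε * ‖x‖ ^ k := by
        have hε : 0 ≤ ε := (abs_nonneg _).trans (htail 0)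
        rw [LOne.norm_eq_tsum_abs, ← hx.sum_add_tsum_nat_add N]
        gcongr
        exact le_add_of_nonneg_left (Finset.sum_nonneg fun _ _ => abs_nonneg _)

lemma continuousOn_weak_diagSum_of_tendsto_zero {ξ : Linf} {k : ℕ} (hk : k ≠ 0)
    (hξ : Tendsto (fun i => ξ i) atTop (𝓝 0)) {S : Set LOne} (hS : Bornology.IsBounded S) :
    ContinuousOn (fun w => diagSum ξ k ((toWeakSpace ℝ LOne).symm w))
      (toWeakSpace ℝ LOne '' S) := by
  obtain ⟨R, hR0, hR⟩ := hS.exists_pos_norm_le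
  have hunif : TendstoUniformlyOn
      (fun N w => ∑ i ∈ Finset.range N, ξ i * ((toWeakSpace ℝ LOne).symm w : LOne) i ^ k)
      (fun w => diagSum ξ k ((toWeakSpace ℝ LOne).symm w)) atTop (toWeakSpace ℝ LOne '' S) := by
    rw [Metric.tendstoUniformlyOn_iff]
    intro δ hδ
    obtain ⟨ε, hε, hεδ⟩ : ∃ ε > 0, ε * R ^ k < δ :=
      ⟨δ / (2 * R ^ k), by positivity, by field_simp; linarith⟩
    obtain ⟨N, hN⟩ := Metric.tendsto_atTop.1 hξ ε hε
    filter_upwards [eventually_ge_atTop N] with n hn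
    rintro _ ⟨x, hx, rfl⟩
    rw [LinearEquiv.symm_apply_apply, Real.dist_eq]
    calc _ ≤ ε * ‖x‖ ^ k := abs_diagSum_sub_sum_range_le hk
          (fun i hi => (Real.dist_0_eq_abs _ ▸ hN i (hn.trans hi)).le) x
      _ ≤ ε * R ^ k := by gcongr; exact hR x hx
      _ < δ := hεδ
  refine hunif.continuousOn (Frequently.of_forall fun N => Continuous.continuousOn ?_)
  exact continuous_finsetSum _ fun i _ =>
    continuous_const.mul ((continuous_weakSpace_apply i).pow k)

lemma exists_finset_norm_lt_of_weakContOnBounded {E F : Type*} [NormedAddCommGroup E]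
    [NormedSpace ℝ E] [NormedAddCommGroup F] [NormedSpace ℝ F] {P : E → F}
    (hP : WeakContOnBounded E F P) (hP0 : P 0 = 0) {δ : ℝ} (hδ : 0 < δ) :
    ∃ (s : Finset (E →L[ℝ] ℝ)) (r : ℝ), 0 < r ∧
      ∀ x ∈ closedBall (0 : E) 1, (∀ φ ∈ s, |φ x| < r) → ‖P x‖ < δ := by
  have hcont := hP _ isBounded_closedBall (toWeakSpace ℝ E 0)
    ⟨0, mem_closedBall_self zero_le_one, rfl⟩
  have hball := hcont.preimage_mem_nhdsWithin (ball_mem_nhds (P 0) hδ)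
  obtain ⟨U, hU, hUsub⟩ := mem_nhdsWithin_iff_exists_mem_nhds_inter.1 hball
  rw [map_zero] at hU
  obtain ⟨V, hV, hVU⟩ := (LinearMap.hasBasis_weakBilin _).mem_iff.1 hU
  obtain ⟨s, r, hr, rfl⟩ := (SeminormFamily.basisSets_iff _).1 hV
  refine ⟨s, r, hr, fun x hx hφ => ?_⟩
  have hxU : toWeakSpace ℝ E x ∈ U := hVU <| (Seminorm.mem_ball_zero _).2 <|
    Seminorm.finset_sup_apply_lt hr hφ
  simpa [hP0] using hUsub ⟨hxU, x, hx, rfl⟩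

lemma exists_lt_lt_dist_lt {X : Type*} [PseudoMetricSpace X] [ProperSpace X] {q : ℕ → X}
    (hq : Bornology.IsBounded (Set.range q)) {η : ℝ} (hη : 0 < η) :
    ∃ a b c, a < b ∧ b < c ∧ dist (q a) (q c) < η ∧ dist (q b) (q c) < η := by
  obtain ⟨L, -, ψ, hψ, hlim⟩ := tendsto_subseq_of_bounded hq (Set.mem_range_self (f := q))
  obtain ⟨N, hN⟩ := Metric.tendsto_atTop.1 hlim (η / 2) (half_pos hη)
  have hclose : ∀ m ≥ N, ∀ n ≥ N, dist (q (ψ m)) (q (ψ n)) < η := fun m hm n hn =>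
    calc _ ≤ dist (q (ψ m)) L + dist (q (ψ n)) L := dist_triangle_right _ _ L
      _ < η / 2 + η / 2 := add_lt_add (hN m hm) (hN n hn)
      _ = η := add_halves η
  exact ⟨ψ N, ψ (N + 1), ψ (N + 2), hψ (by omega), hψ (by omega),
    hclose _ le_rfl _ (by omega), hclose _ (by omega) _ (by omega)⟩

lemma six_le_abs_two_add_neg_two_pow {k : ℕ} (hk : 2 ≤ k) : 6 ≤ |2 + (-2 : ℝ) ^ k| := by
  rcases k.even_or_odd with he | ho
  · have : (4 : ℝ) ≤ 2 ^ k := by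
      calc (4 : ℝ) = 2 ^ 2 := by norm_num
        _ ≤ 2 ^ k := pow_le_pow_right₀ (by norm_num) hk
    rw [he.neg_pow, abs_of_pos (by positivity)]
    linarith
  · have hk3 : 3 ≤ k := by
      obtain ⟨m, rfl⟩ := ho
      omega
    have : (8 : ℝ) ≤ 2 ^ k := by
      calc (8 : ℝ) = 2 ^ 3 := by norm_num
        _ ≤ 2 ^ k := pow_le_pow_right₀ (by norm_num) hk3
    rw [ho.neg_pow, abs_of_neg (by linarith)]
    linarith

lemma le_abs_add_add_neg_two_pow_mul {k : ℕ} (hk : 2 ≤ k) {ε s ta tb : ℝ} (hs : ε ≤ |s|)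
    (ha : |ta - s| < ε) (hb : |tb - s| < ε) : ε ≤ |ta + tb + (-2) ^ k * s| := by
  have h6 : 6 * ε ≤ |(2 + (-2 : ℝ) ^ k) * s| := by
    rw [abs_mul]
    exact mul_le_mul (six_le_abs_two_add_neg_two_pow hk) hs ((abs_nonneg _).trans_lt ha).le
      (abs_nonneg _)
  have htri : |(2 + (-2 : ℝ) ^ k) * s| ≤ |ta + tb + (-2) ^ k * s| + |ta - s| + |tb - s| := by
    have h1 := abs_sub (ta + tb + (-2) ^ k * s - (ta - s)) (tb - s)
    have h2 := abs_sub (ta + tb + (-2) ^ k * s) (ta - s)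
    calc |(2 + (-2 : ℝ) ^ k) * s| = |ta + tb + (-2) ^ k * s - (ta - s) - (tb - s)| := by
          congr 1; ring
      _ ≤ _ := by linarith
  linarith [abs_nonneg (ta - s)]

def unitVec (m : ℕ) : LOne := lp.single 1 m 1

def testVec (a b c : ℕ) : LOne := (4 : ℝ)⁻¹ • (unitVec a + unitVec b - (2 : ℝ) • unitVec c)

lemma norm_unitVec (m : ℕ) : ‖unitVec m‖ = 1 := by
  simp [unitVec, lp.norm_single]

lemma unitVec_apply (m i : ℕ) : unitVec m i = if i = m then 1 else 0 := by
  simp [unitVec, lp.single_apply, Pi.single_apply]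

lemma testVec_apply (a b c i : ℕ) :
    testVec a b c i = 4⁻¹ * (unitVec a i + unitVec b i - 2 * unitVec c i) := rfl

lemma norm_testVec_le (a b c : ℕ) : ‖testVec a b c‖ ≤ 1 := by
  calc ‖testVec a b c‖ ≤ 4⁻¹ * (‖unitVec a‖ + ‖unitVec b‖ + 2 * ‖unitVec c‖) := by
        rw [testVec, norm_smul, norm_inv, Real.norm_ofNat]
        gcongr
        refine (norm_sub_le _ _).trans ?_
        rw [norm_smul, Real.norm_ofNat]
        gcongr
        exact norm_add_le _ _
    _ = 1 := by norm_num [norm_unitVec]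

lemma diagSum_testVec (ξ : Linf) {k : ℕ} (hk : k ≠ 0) {a b c : ℕ} (hab : a ≠ b) (hac : a ≠ c)
    (hbc : b ≠ c) :
    diagSum ξ k (testVec a b c) = (ξ a + ξ b + (-2) ^ k * ξ c) / 4 ^ k := by
  rw [diagSum, tsum_eq_sum (s := {a, b, c}), Finset.sum_insert (by simp [hab, hac]),
    Finset.sum_insert (by simp [hbc]), Finset.sum_singleton]
  · simp [testVec_apply, unitVec_apply, hab, hac, hbc, hab.symm, hac.symm, hbc.symm]
    rw [show -(4⁻¹ * 2 : ℝ) = 4⁻¹ * -2 by ring, mul_pow, inv_pow]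
    ring
  · intro i hi
    simp only [Finset.mem_insert, Finset.mem_singleton, not_or] at hi
    simp [testVec_apply, unitVec_apply, hi, zero_pow hk]

lemma norm_map_testVec_le {G : Type*} [SeminormedAddCommGroup G] [NormedSpace ℝ G]
    (L : LOne →L[ℝ] G) (a b c : ℕ) :
    ‖L (testVec a b c)‖ ≤
      (‖L (unitVec a) - L (unitVec c)‖ + ‖L (unitVec b) - L (unitVec c)‖) / 4 := by
  have : L (testVec a b c) =
      (4 : ℝ)⁻¹ • ((L (unitVec a) - L (unitVec c)) + (L (unitVec b) - L (unitVec c))) := by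
    simp only [testVec, map_smul, map_sub, map_add]
    module
  rw [this, norm_smul, norm_inv, Real.norm_ofNat, inv_mul_eq_div]
  gcongr
  exact norm_add_le _ _

lemma tendsto_zero_of_weakContOnBounded_diagSum_smul {F : Type*} [NormedAddCommGroup F]
    [NormedSpace ℝ F] {v : F} (hv : v ≠ 0) {ξ : Linf} {k : ℕ} (hk : 2 ≤ k)
    (hw : WeakContOnBounded LOne F fun x => diagSum ξ k x • v) :
    Tendsto (fun i => ξ i) atTop (𝓝 0) := by
  by_contra hξ
  obtain ⟨ε, hε, u, hu, huξ⟩ : ∃ ε > 0, ∃ u : ℕ → ℕ, StrictMono u ∧ ∀ n, ε ≤ |ξ (u n)| := by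
    obtain ⟨U, hU, hfreq⟩ := not_tendsto_iff_exists_frequently_notMem.1 hξ
    obtain ⟨ε, hε, hball⟩ := Metric.mem_nhds_iff.1 hU
    refine ⟨ε, hε, extraction_of_frequently_atTop (P := fun n => ε ≤ |ξ n|)
      (hfreq.mono fun n hn => ?_)⟩
    exact not_lt.1 fun h => hn (hball (by simpa using h))
  have hk0 : k ≠ 0 := by omega
  obtain ⟨s, r, hr, hsmall⟩ := exists_finset_norm_lt_of_weakContOnBounded hw
    (by simp [diagSum, zero_pow hk0]) (δ := ε * ‖v‖ / 4 ^ k)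
    (by have := norm_pos_iff.2 hv; positivity)
  let L : LOne →L[ℝ] (s → ℝ) := ContinuousLinearMap.pi fun φ => (φ : LOne →L[ℝ] ℝ)
  let q : ℕ → (s → ℝ) × ℝ := fun n => (L (unitVec (u n)), ξ (u n))
  have hq : Bornology.IsBounded (Set.range q) := by
    refine isBounded_iff_forall_norm_le.2 ⟨‖L‖ + ‖ξ‖, ?_⟩
    rintro _ ⟨n, rfl⟩
    refine norm_prod_le_iff.2 ⟨?_, ?_⟩
    · calc ‖L (unitVec (u n))‖ ≤ ‖L‖ := by
            simpa [norm_unitVec] using L.le_opNorm (unitVec (u n))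
        _ ≤ ‖L‖ + ‖ξ‖ := le_add_of_nonneg_right (norm_nonneg ξ)
    · exact (Linf.abs_apply_le_norm ξ _).trans (le_add_of_nonneg_left (norm_nonneg L))
  obtain ⟨a, b, c, hab, hbc, hqac, hqbc⟩ := exists_lt_lt_dist_lt hq (lt_min hr hε)
  simp only [q, Prod.dist_eq, max_lt_iff, lt_min_iff, dist_eq_norm (L _), Real.dist_eq]
    at hqac hqbc
  obtain ⟨⟨hLac, -⟩, -, hξac⟩ := hqac
  obtain ⟨⟨hLbc, -⟩, -, hξbc⟩ := hqbc
  have hLx : ‖L (testVec (u a) (u b) (u c))‖ < r :=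
    (norm_map_testVec_le L _ _ _).trans_lt (by linarith)
  have hPx := hsmall _ (mem_closedBall_zero_iff.2 (norm_testVec_le _ _ _))
    fun φ hφ => (norm_le_pi_norm (L _) ⟨φ, hφ⟩).trans_lt hLx
  have hbig := le_abs_add_add_neg_two_pow_mul hk (huξ c) hξac hξbc
  rw [norm_smul, diagSum_testVec ξ hk0 (hu hab).ne (hu (hab.trans hbc)).ne (hu hbc).ne,
    Real.norm_eq_abs, abs_div, abs_of_pos (by positivity : (0:ℝ) < 4 ^ k), div_mul_eq_mul_div,
    div_lt_div_iff_of_pos_right (by positivity)] at hPx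
  exact (mul_le_mul_of_nonneg_right hbig (norm_nonneg v)).not_gt hPx

lemma apply_diag_eq_diagSum_smul_of_represents {F : Type*} [NormedAddCommGroup F]
    [NormedSpace ℝ F] {v : F} {ξ : Linf} {k : ℕ} {f : BoundedContinuousFunction (Ball LOne) F}
    (hval : ∀ y : Ball LOne, f y = diagSum ξ k y • v)
    {A : ContinuousMultilinearMap ℝ (fun _ : Fin k => LOne) F} (hA : Represents A f) :
    (fun x => A fun _ => x) = fun x => diagSum ξ k x • v :=
  eq_of_eqOn_closedBall_of_homogeneous A.map_smul_diag
    (fun t x => by rw [diagSum_smul, mul_smul])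
    fun x hx => by rw [← hA.2 ⟨x, hx⟩, hval]

theorem stmt8_general (F : Type*) [NormedAddCommGroup F] [NormedSpace ℝ F]
    (v : F) (hv : ‖v‖ = 1) (j : ℕ) (ξ : Linf)
    (f : BoundedContinuousFunction (Ball LOne) F) (hf : f ∈ polySet (j + 2) LOne F)
    (hval : ∀ y : Ball LOne, f y = (∑' i : ℕ, ξ i * ((y : LOne) i) ^ (j + 2)) • v) :
    f ∈ polyWbSet (j + 2) LOne F ↔ Tendsto (fun i => ξ i) atTop (nhds (0 : ℝ)) := by
  have hv0 : v ≠ 0 := norm_ne_zero_iff.1 (hv ▸ one_ne_zero)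
  constructor
  · rintro ⟨A, hA, hw⟩
    rw [apply_diag_eq_diagSum_smul_of_represents hval hA] at hw
    exact tendsto_zero_of_weakContOnBounded_diagSum_smul hv0 (by omega) hw
  · intro hξ
    obtain ⟨A, hA⟩ := hf
    refine ⟨A, hA, ?_⟩
    rw [apply_diag_eq_diagSum_smul_of_represents hval hA]
    exact fun S hS => (continuousOn_weak_diagSum_of_tendsto_zero (by omega) hξ hS).smul
      continuousOn_const

theorem stmt8 (F : Type*) [NormedAddCommGroup F] [NormedSpace ℝ F] [CompleteSpace F]
    (v : F) (hv : ‖v‖ = 1) (j : ℕ) (ξ : Linf)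
    (f : BoundedContinuousFunction (Ball LOne) F) (hf : f ∈ polySet (j + 2) LOne F)
    (hval : ∀ y : Ball LOne, f y = (∑' i : ℕ, ξ i * ((y : LOne) i) ^ (j + 2)) • v) :
    f ∈ polyWbSet (j + 2) LOne F ↔ Tendsto (fun i => ξ i) atTop (nhds (0 : ℝ)) :=
  stmt8_general F v hv j ξ f hf hval

end Stmts
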